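/- Distinct-token cancellation is one-way only: for distinct tokens t₁ ≠ t₂, rationals lo < hi, and dimension tag d, OneWayOnly (Sub (Meas t₁ lo hi d) (Meas t₂ lo hi d)) (Exact 0 d) holds; that is, the rewrite to Exact 0 d is licensed by enclosure containment but the reverse containment fails. -/

import Mathlib

abbrev Token := ℕ

inductive Dim where
  | base
deriving DecidableEq

inductive Expr where
  | Exact (q : ℚ) (d : Dim)
  | Meas (t : Token) (lo hi : ℚ) (d : Dim)
  | Add (a b : Expr)
  | Sub (a b : Expr)
  | Mul (a b : Expr)
  | Div (a b : Expr)
  | Neg (a : Expr)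

abbrev TokenEnv := Token → ℚ

def TokenConsistent (σ : TokenEnv) : Expr → Prop
  | .Exact _ _ => True
  | .Meas t lo hi _ => lo ≤ σ t ∧ σ t ≤ hi
  | .Add a b => TokenConsistent σ a ∧ TokenConsistent σ b
  | .Sub a b => TokenConsistent σ a ∧ TokenConsistent σ b
  | .Mul a b => TokenConsistent σ a ∧ TokenConsistent σ b
  | .Div a b => TokenConsistent σ a ∧ TokenConsistent σ b
  | .Neg a => TokenConsistent σ a

def eval (σ : TokenEnv) : Expr → ℚ
  | .Exact q _ => q
  | .Meas t _ _ _ => σ t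
  | .Add a b => eval σ a + eval σ b
  | .Sub a b => eval σ a - eval σ b
  | .Mul a b => eval σ a * eval σ b
  | .Div a b => eval σ a / eval σ b
  | .Neg a => - eval σ a

def Encl (e : Expr) : Set ℚ := {v : ℚ | ∃ σ : TokenEnv, TokenConsistent σ e ∧ eval σ e = v}

def RewritesTo (e e' : Expr) : Prop := Encl e' ⊆ Encl e

def Interchangeable (e e' : Expr) : Prop := Encl e = Encl e'

def OneWayOnly (e e' : Expr) : Prop := RewritesTo e e' ∧ ¬ RewritesTo e' e

/-! Distinct tokens can be instantiated independently, so the enclosure of the difference of the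
two measured leaves is the full pointwise difference `[lo, hi] - [lo, hi]`. It contains `0`, the
only value of `Exact 0 d`, but also the width `hi - lo ≠ 0`. -/

open scoped Pointwise

@[simp]
lemma encl_exact (q : ℚ) (d : Dim) : Encl (.Exact q d) = {q} := by
  ext v
  simp only [Encl, TokenConsistent, eval, true_and, exists_const, Set.mem_ofPred_eq,
    Set.mem_singleton_iff, eq_comm]

lemma encl_sub_meas_of_ne {t₁ t₂ : Token} (hne : t₁ ≠ t₂) (lo₁ hi₁ lo₂ hi₂ : ℚ) (d₁ d₂ : Dim) :
    Encl (.Sub (.Meas t₁ lo₁ hi₁ d₁) (.Meas t₂ lo₂ hi₂ d₂)) = Set.Icc lo₁ hi₁ - Set.Icc lo₂ hi₂ := by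
  ext v
  constructor
  · rintro ⟨σ, ⟨h₁, h₂⟩, rfl⟩
    exact ⟨σ t₁, h₁, σ t₂, h₂, rfl⟩
  · rintro ⟨x, hx, y, hy, rfl⟩
    let σ : TokenEnv := Function.update (fun _ => y) t₁ x
    have hσ₁ : σ t₁ = x := Function.update_self ..
    have hσ₂ : σ t₂ = y := Function.update_of_ne hne.symm ..
    refine ⟨σ, ⟨?_, ?_⟩, ?_⟩ <;> simp only [TokenConsistent, eval, hσ₁, hσ₂]
    exacts [hx, hy]

theorem distinct_token_subtraction_one_way_only_to_exact_zero
    (t₁ t₂ : Token) (hne : t₁ ≠ t₂) (lo hi : ℚ) (hlt : lo < hi) (d : Dim) :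
    OneWayOnly (.Sub (.Meas t₁ lo hi d) (.Meas t₂ lo hi d)) (.Exact 0 d) := by
  have hlo : lo ∈ Set.Icc lo hi := Set.left_mem_Icc.mpr hlt.le
  have hhi : hi ∈ Set.Icc lo hi := Set.right_mem_Icc.mpr hlt.le
  unfold OneWayOnly RewritesTo
  rw [encl_exact, encl_sub_meas_of_ne hne]
  refine ⟨Set.singleton_subset_iff.mpr ⟨lo, hlo, lo, hlo, sub_self lo⟩, fun hsub => ?_⟩
  have hwidth : hi - lo ∈ ({0} : Set ℚ) := hsub ⟨hi, hhi, lo, hlo, rfl⟩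
  exact (sub_ne_zero.mpr hlt.ne') hwidth
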